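/- arXiv:2405.10726 — 4 statements merged into one kernel-verified Lean document; each statement's English description precedes it below -/
import Mathlib

section
/- Let k have characteristic p > 0, let n be a positive integer, and let m = p^l·m' with l ≥ 1 and p not dividing m'. Let H be a subgroup of the symmetric group S_n whose order is not divisible by p, acting on (Z/mZ)^n by permuting coordinates, and set G := (Z/mZ)^n ⋊ H. Let R be a p-hyperfocal subgroup of G and let C_{(Z/mZ)^n}(H) be the centralizer of H in (Z/mZ)^n (the set of vectors fixed by the permutation action of every element of H). Then rank(R) + rank(C_{(Z/mZ)^n}(H)) = n. -/
/-!
Since `p ∤ |H|`, the Sylow `p`-subgroup of `G = (ℤ/m)^n ⋊ H` is the `p^l`-torsion of the base.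
Multiplying the base entries over each `H`-orbit on `Fin n` is `H`-invariant, so it is a
homomorphism from `G` to `(ℤ/m)^k`, `k` the number of orbits, and `O^p(G)` is the preimage of the
`m'`-torsion: it contains `H`, the `m'`-torsion of the base and the commutators `[v, σ]`, and these
generate that preimage. Hence `R` is the group of `p^l`-torsion vectors with trivial orbit
products, which is determined by its entries off a set of orbit representatives, so
`R ≅ T^(n - k)` with `T ≤ ℤ/m` cyclic of order `p^l`, while `C(H) ≅ (ℤ/m)^k`. Finally a power `A^r`
of a nontrivial finite cyclic group has rank `r`: `r` generators suffice, and `|A|^r` divides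
`|A|^rank` because `|A|` kills `A^r`.
-/

universe u

/-- The action of permutations on tuples by permuting the entries:
`(σ • v) i = v (σ⁻¹ i)`. -/
def permMulAut (n : ℕ) (A : Type u) [CommGroup A] :
    Equiv.Perm (Fin n) →* MulAut (Fin n → A) where
  toFun σ :=
    { toFun := fun v => v ∘ σ.symm
      invFun := fun v => v ∘ σ
      left_inv := fun v => by ext i; simp
      right_inv := fun v => by ext i; simp
      map_mul' := fun v w => rfl }
  map_one' := by ext v i; rfl
  map_mul' := fun σ τ => by
    ext v i
    show v ((σ * τ).symm i) = v (τ.symm (σ.symm i))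
    rfl

/-- The semidirect product `(ℤ/mℤ)^n ⋊ H` where `H ≤ S_n` permutes the coordinates. -/
abbrev PermSdp (m n : ℕ) (H : Subgroup (Equiv.Perm (Fin n))) : Type :=
  (Fin n → Multiplicative (ZMod m)) ⋊[(permMulAut n (Multiplicative (ZMod m))).comp H.subtype] ↥H

/-- The centralizer of `H` in `(ℤ/mℤ)^n`: the subgroup of vectors fixed by the
permutation action of every element of `H`. -/
def fixedVectors (m n : ℕ) (H : Subgroup (Equiv.Perm (Fin n))) :
    Subgroup (Fin n → Multiplicative (ZMod m)) where
  carrier := {v | ∀ σ ∈ H, permMulAut n (Multiplicative (ZMod m)) σ v = v}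
  one_mem' := fun σ _ => map_one _
  mul_mem' := fun {a b} ha hb σ hσ => by rw [map_mul, ha σ hσ, hb σ hσ]
  inv_mem' := fun {a} ha σ hσ => by rw [map_inv, ha σ hσ]

/-- The rank of a group: the minimal cardinality of a generating set. -/
noncomputable def grpRank (G : Type u) [Group G] : ℕ :=
  sInf {c : ℕ | ∃ s : Finset G, s.card = c ∧ Subgroup.closure (s : Set G) = ⊤}

lemma grpRank_eq_rank (G : Type*) [Group G] [Group.FG G] : grpRank G = Group.rank G := by
  refine le_antisymm (Nat.sInf_le (Group.rank_spec G)) (le_csInf ?_ ?_)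
  · exact ⟨_, Group.rank_spec G⟩
  · rintro c ⟨s, rfl, hs⟩
    exact Group.rank_le hs

lemma grpRank_congr {G G' : Type*} [Group G] [Group G'] [Finite G'] (e : G ≃* G') :
    grpRank G = grpRank G' := by
  have : Finite G := Finite.of_equiv G' e.symm.toEquiv
  rw [grpRank_eq_rank, grpRank_eq_rank, Group.rank_congr e]

lemma closure_image_mulSingle_eq_top {ι B : Type*} [Finite ι] [DecidableEq ι] [Group B]
    {s : Set B} (hs : Subgroup.closure s = ⊤) :
    Subgroup.closure (⋃ i, Pi.mulSingle i '' s) = (⊤ : Subgroup (ι → B)) := by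
  rw [eq_top_iff, ← Subgroup.pi_top Set.univ, Subgroup.pi_le_iff]
  intro i
  rw [← hs, MonoidHom.map_closure]
  exact Subgroup.closure_mono (Set.subset_iUnion_of_subset i subset_rfl)

lemma grpRank_pi_of_isCyclic (ι B : Type*) [Finite ι] [CommGroup B] [IsCyclic B] [Finite B]
    [Nontrivial B] : grpRank (ι → B) = Nat.card ι := by
  classical
  have := Fintype.ofFinite ι
  rw [grpRank_eq_rank]
  apply le_antisymm
  · obtain ⟨g, hg⟩ := IsCyclic.exists_generator (α := B)
    have hclos : Subgroup.closure {g} = ⊤ := by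
      rw [← Subgroup.zpowers_eq_closure, eq_top_iff]; exact fun x _ => hg x
    calc Group.rank (ι → B) ≤ (Finset.univ.image fun i => Pi.mulSingle i g).card := by
          apply Group.rank_le
          rw [← closure_image_mulSingle_eq_top (ι := ι) hclos]
          congr 1; ext; simp
      _ ≤ Nat.card ι := by rw [Nat.card_eq_fintype_card]; exact Finset.card_image_le
  · have hdvd := card_dvd_exponent_pow_rank' (ι → B) (n := Nat.card B)
      (fun v => funext fun i => pow_card_eq_one')
    rwa [Nat.card_pi, Finset.prod_const, Finset.card_univ, ← Nat.card_eq_fintype_card,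
      Nat.pow_dvd_pow_iff_le_right Finite.one_lt_card] at hdvd

section FiberProd

variable {ι κ B : Type*} [Fintype ι] [CommGroup B]

/-- Pushforward of a vector along `f`: `(fiberProd f v) k = ∏_{f i = k} v i`. -/
def fiberProd [DecidableEq κ] (f : ι → κ) : (ι → B) →* (κ → B) :=
  ∏ i, (MonoidHom.mulSingle (fun _ => B) (f i)).comp (Pi.evalMonoidHom (fun _ => B) i)

variable [DecidableEq κ]

lemma fiberProd_apply (f : ι → κ) (v : ι → B) :
    fiberProd f v = ∏ i, Pi.mulSingle (f i) (v i) := by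
  simp [fiberProd]

lemma fiberProd_mulSingle [DecidableEq ι] (f : ι → κ) (i : ι) (a : B) :
    fiberProd f (Pi.mulSingle i a) = Pi.mulSingle (f i) a := by
  rw [fiberProd_apply, Finset.prod_eq_single i (fun j _ hj => by simp [hj]) (by simp)]
  simp

lemma fiberProd_comp {μ : Type*} [Fintype κ] [DecidableEq μ] (g : κ → μ) (f : ι → κ) :
    fiberProd (B := B) (g ∘ f) = (fiberProd g).comp (fiberProd f) := by
  classical
  exact MonoidHom.functions_ext' _ _ _ fun i => MonoidHom.ext fun a => by
    simp [fiberProd_mulSingle]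

lemma fiberProd_compLeft {C : Type*} [CommGroup C] (φ : B →* C) (f : ι → κ) (v : ι → B) :
    fiberProd f (φ ∘ v) = φ ∘ fiberProd f v := by
  funext k
  simp [fiberProd_apply, Finset.prod_apply, map_prod, Pi.mulSingle_apply, apply_ite]

lemma fiberProd_comp_perm (f : ι → κ) (τ : Equiv.Perm ι) (hτ : ∀ i, f (τ i) = f i)
    (v : ι → B) : fiberProd f (v ∘ τ) = fiberProd f v := by
  rw [fiberProd_apply, fiberProd_apply]
  conv_rhs => rw [← Equiv.prod_comp τ]
  simp only [Function.comp_apply, hτ]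

lemma eq_one_of_fiberProd_eq_one {f : ι → κ} (s : κ → ι) {v : ι → B}
    (hv : fiberProd f v = 1) (hD : ∀ i, s (f i) ≠ i → v i = 1) : v = 1 := by
  funext i
  by_cases hi : s (f i) = i
  · have := congrFun hv (f i)
    rwa [fiberProd_apply, Finset.prod_apply, Finset.prod_eq_single i, Pi.mulSingle_eq_same]
      at this
    · intro j _ hji
      by_cases hj : f j = f i
      · rw [hD j (by rw [hj, hi]; exact hji.symm), Pi.mulSingle_one, Pi.one_apply]
      · exact Pi.mulSingle_eq_of_ne' hj _
    · simp
  · exact hD i hi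

end FiberProd

section FiberProdKer

variable {ι κ B : Type*} [Fintype ι] [DecidableEq ι] [CommGroup B] (f : ι → κ) (s : κ → ι)

def fiberProdKerLift : ({i // s (f i) ≠ i} → B) →* (ι → B) :=
  ∏ d : {i // s (f i) ≠ i}, ((MonoidHom.mulSingle (fun _ => B) d.1) /
    (MonoidHom.mulSingle (fun _ => B) (s (f d.1)))).comp (Pi.evalMonoidHom (fun _ => B) d)

lemma fiberProdKerLift_apply (w : {i // s (f i) ≠ i} → B) :
    fiberProdKerLift f s w = ∏ d, Pi.mulSingle d.1 (w d) / Pi.mulSingle (s (f d.1)) (w d) := by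
  simp [fiberProdKerLift]

variable {f s}

lemma fiberProd_fiberProdKerLift [DecidableEq κ] (hfs : Function.LeftInverse f s)
    (w : {i // s (f i) ≠ i} → B) : fiberProd f (fiberProdKerLift f s w) = 1 := by
  simp [fiberProdKerLift_apply, map_prod, fiberProd_mulSingle, hfs _]

lemma fiberProdKerLift_apply_of_ne (hfs : Function.LeftInverse f s)
    (w : {i // s (f i) ≠ i} → B) (d : {i // s (f i) ≠ i}) :
    fiberProdKerLift f s w d = w d := by
  rw [fiberProdKerLift_apply, Finset.prod_apply, Finset.prod_eq_single d]
  · simp [Pi.mulSingle_eq_of_ne' d.2]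
  · intro d' _ hd'
    have h1 : d.1 ≠ d'.1 := fun h => hd' (Subtype.ext h).symm
    have h2 : d.1 ≠ s (f d'.1) := fun h => d.2 (by rw [h, hfs])
    simp [Pi.mulSingle_eq_of_ne h1, Pi.mulSingle_eq_of_ne h2]
  · simp

def fiberProdKerEquiv [DecidableEq κ] (hfs : Function.LeftInverse f s) :
    (fiberProd f : (ι → B) →* (κ → B)).ker ≃* ({i // s (f i) ≠ i} → B) where
  toFun v d := v.1 d
  invFun w := ⟨fiberProdKerLift f s w, fiberProd_fiberProdKerLift hfs w⟩
  left_inv v := by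
    refine Subtype.ext (div_eq_one.mp (eq_one_of_fiberProd_eq_one (f := f) s ?_ fun i hi => ?_))
    · rw [map_div, fiberProd_fiberProdKerLift hfs, v.2, div_one]
    · exact div_eq_one.mpr (fiberProdKerLift_apply_of_ne hfs (fun d => v.1 d) ⟨i, hi⟩)
  right_inv w := funext (fiberProdKerLift_apply_of_ne hfs w)
  map_mul' _ _ := rfl

lemma card_subtype_ne_add_card (hfs : Function.LeftInverse f s) [Finite κ] :
    Nat.card {i // s (f i) ≠ i} + Nat.card κ = Nat.card ι := by
  have hrep : {i // s (f i) = i} ≃ κ :=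
    { toFun i := f i
      invFun k := ⟨s k, by rw [hfs]⟩
      left_inv i := Subtype.ext i.2
      right_inv := hfs }
  rw [← Nat.card_congr (Equiv.sumCompl fun i => s (f i) = i), Nat.card_sum,
    Nat.card_congr hrep, add_comm]

end FiberProdKer

lemma permMulAut_apply {n : ℕ} {A : Type*} [CommGroup A] (σ : Equiv.Perm (Fin n))
    (v : Fin n → A) : permMulAut n A σ v = v ∘ σ.symm := rfl

lemma permMulAut_mulSingle {n : ℕ} {A : Type*} [CommGroup A] (σ : Equiv.Perm (Fin n))
    (i : Fin n) (a : A) : permMulAut n A σ (Pi.mulSingle i a) = Pi.mulSingle (σ i) a := by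
  funext j
  simp [permMulAut_apply, Pi.mulSingle_apply, Equiv.symm_apply_eq]

section Orbits

open MulAction
open scoped Classical

variable {n : ℕ} {H : Subgroup (Equiv.Perm (Fin n))}

lemma orbit_mk_apply {σ : Equiv.Perm (Fin n)} (hσ : σ ∈ H) (i : Fin n) :
    (⟦σ i⟧ : orbitRel.Quotient H (Fin n)) = ⟦i⟧ :=
  orbitRel.Quotient.quotient_smul_eq (g := (⟨σ, hσ⟩ : H))

lemma exists_apply_eq_out (i : Fin n) :
    ∃ σ ∈ H, σ i = (⟦i⟧ : orbitRel.Quotient H (Fin n)).out := by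
  obtain ⟨σ, hσ⟩ := Quotient.mk_out (s := orbitRel H (Fin n)) i
  exact ⟨σ, σ.2, hσ⟩

lemma fiberProd_orbit_permMulAut {A : Type*} [CommGroup A] {σ : Equiv.Perm (Fin n)} (hσ : σ ∈ H)
    (v : Fin n → A) :
    fiberProd (Quotient.mk (orbitRel H (Fin n))) (permMulAut n A σ v) =
      fiberProd (Quotient.mk _) v :=
  fiberProd_comp_perm _ σ.symm (orbit_mk_apply (H.inv_mem hσ)) v

end Orbits

lemma eq_one_of_pow_prime_pow_eq_one {p : ℕ} [Fact p.Prime] {M : Type*} [Monoid M] {x : M}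
    {k d : ℕ} (hk : x ^ p ^ k = 1) (hd : ¬ p ∣ d) (hx : x ^ d = 1) : x = 1 :=
  (pow_eq_one_iff_of_coprime
    (Nat.Coprime.pow_left k ((Nat.Prime.coprime_iff_not_dvd Fact.out).mpr hd))).mp ⟨hk, hx⟩

lemma Subgroup.mem_of_isPGroup_quotient {p : ℕ} [Fact p.Prime] {G : Type*} [Group G]
    {O : Subgroup G} [O.Normal] (hO : IsPGroup p (G ⧸ O)) {d : ℕ} (hd : ¬ p ∣ d) {g : G}
    (hg : g ^ d = 1) : g ∈ O := by
  rw [← QuotientGroup.eq_one_iff]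
  obtain ⟨k, hk⟩ := hO g
  exact eq_one_of_pow_prime_pow_eq_one hk hd
    (by rw [← QuotientGroup.mk_pow, hg, QuotientGroup.mk_one])

lemma SemidirectProduct.inl_mul_inv_aut_mem {N G : Type*} [Group N] [Group G]
    {φ : G →* MulAut N} {O : Subgroup (N ⋊[φ] G)} [O.Normal] {g : G} (hg : inr g ∈ O) (x : N) :
    inl (x * (φ g x)⁻¹) ∈ O := by
  have : (inl (x * (φ g x)⁻¹) : N ⋊[φ] G) = inl x * inr g * (inl x)⁻¹ * (inr g)⁻¹ := by
    rw [map_mul, map_inv, inl_aut]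
    simp only [mul_inv_rev, map_inv, inv_inv, mul_assoc]
  rw [this]
  exact O.mul_mem (Subgroup.Normal.conj_mem ‹_› _ hg _) (O.inv_mem hg)

lemma pi_zmod_pow_eq_one {ι : Type*} {m : ℕ} (v : ι → Multiplicative (ZMod m)) : v ^ m = 1 := by
  funext i
  rw [Pi.pow_apply, Pi.one_apply, ← toAdd_eq_zero, toAdd_pow, nsmul_eq_mul, ZMod.natCast_self,
    zero_mul]

section PermSdp

open MulAction SemidirectProduct
open scoped Classical

variable {m n : ℕ} {H : Subgroup (Equiv.Perm (Fin n))}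

lemma apply_eq_of_mem_fixedVectors {v : Fin n → Multiplicative (ZMod m)}
    (hv : v ∈ fixedVectors m n H) {σ : Equiv.Perm (Fin n)} (hσ : σ ∈ H) (i : Fin n) :
    v (σ i) = v i := by
  simpa [permMulAut_apply] using (congrFun (hv σ hσ) (σ i)).symm

noncomputable def fixedVectorsEquiv :
    fixedVectors m n H ≃* (orbitRel.Quotient H (Fin n) → Multiplicative (ZMod m)) where
  toFun v ω := v.1 ω.out
  invFun w := ⟨w ∘ Quotient.mk _, fun σ hσ => funext fun i => by
    show w ⟦σ⁻¹ i⟧ = w ⟦i⟧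
    rw [orbit_mk_apply (H.inv_mem hσ)]⟩
  left_inv v := Subtype.ext <| funext fun i => by
    obtain ⟨σ, hσ, hσi⟩ := exists_apply_eq_out (H := H) i
    simp only [Function.comp_apply, ← hσi]
    exact apply_eq_of_mem_fixedVectors v.2 hσ i
  right_inv w := funext fun ω => congrArg w (Quotient.out_eq ω)
  map_mul' _ _ := rfl

/-- The orbit products are `H`-invariant, hence multiplicative on the semidirect product. -/
noncomputable def orbitProdHom :
    PermSdp m n H →* (orbitRel.Quotient H (Fin n) → Multiplicative (ZMod m)) where
  toFun g := fiberProd (Quotient.mk _) g.left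
  map_one' := map_one _
  map_mul' a b := by
    simp only [mul_left, map_mul]
    congr 1
    exact fiberProd_orbit_permMulAut a.right.2 b.left

end PermSdp

section Hyperfocal

open MulAction SemidirectProduct
open scoped Classical

variable {p l m' n : ℕ} {H : Subgroup (Equiv.Perm (Fin n))}

lemma sylow_eq_map_inl_ker_powMonoidHom [Fact p.Prime] (hH : ¬ p ∣ Nat.card H)
    (hpm' : ¬ p ∣ m') (S : Sylow p (PermSdp (p ^ l * m') n H)) :
    (S : Subgroup (PermSdp (p ^ l * m') n H)) = (powMonoidHom (p ^ l)).ker.map inl := by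
  have hP : IsPGroup p ((powMonoidHom (p ^ l) :
      (Fin n → Multiplicative (ZMod (p ^ l * m'))) →* _).ker) :=
    fun v => ⟨l, Subtype.ext v.2⟩
  refine (S.is_maximal' (hP.map inl) fun g hg => ?_).symm
  obtain ⟨k, hk⟩ := S.isPGroup' ⟨g, hg⟩
  replace hk : g ^ p ^ k = 1 := congrArg Subtype.val hk
  have hright : g.right = 1 :=
    eq_one_of_pow_prime_pow_eq_one (by rw [← rightHom_eq_right, ← map_pow, hk, map_one]) hH
      pow_card_eq_one'
  have hg : inl g.left = g := by
    conv_rhs => rw [← inl_left_mul_inr_right g, hright, map_one, mul_one]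
  have hleft : g.left ^ p ^ k = 1 := inl_injective (by rw [map_pow, hg, hk, map_one])
  refine ⟨g.left, eq_one_of_pow_prime_pow_eq_one (k := k) ?_ hpm' ?_, hg⟩
  · rw [powMonoidHom_apply, pow_right_comm, hleft, one_pow]
  · rw [powMonoidHom_apply, ← pow_mul, pi_zmod_pow_eq_one]

lemma isPGroup_quotient_comap_orbitProdHom :
    IsPGroup p (PermSdp (p ^ l * m') n H ⧸ (powMonoidHom m').ker.comap orbitProdHom) := by
  intro x
  obtain ⟨g, rfl⟩ := QuotientGroup.mk_surjective x
  refine ⟨l, ?_⟩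
  rw [← QuotientGroup.mk_pow, QuotientGroup.eq_one_iff, Subgroup.mem_comap, MonoidHom.mem_ker,
    powMonoidHom_apply, map_pow, ← pow_mul, pi_zmod_pow_eq_one]

lemma inr_mem_of_isPGroup_quotient {m : ℕ} [Fact p.Prime] (hH : ¬ p ∣ Nat.card H)
    {O : Subgroup (PermSdp m n H)} [O.Normal] (hO : IsPGroup p (PermSdp m n H ⧸ O)) (σ : H) :
    inr σ ∈ O :=
  O.mem_of_isPGroup_quotient hO hH (by rw [← map_pow, pow_card_eq_one', map_one])

lemma inl_mulSingle_div_mem {m : ℕ} {O : Subgroup (PermSdp m n H)} [O.Normal]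
    (hO : ∀ σ : H, inr σ ∈ O) (i : Fin n) (a : Multiplicative (ZMod m))
    {σ : Equiv.Perm (Fin n)} (hσ : σ ∈ H) :
    inl (Pi.mulSingle i a / Pi.mulSingle (σ i) a) ∈ O := by
  rw [div_eq_mul_inv, ← permMulAut_mulSingle]
  exact inl_mul_inv_aut_mem (hO ⟨σ, hσ⟩) _

/-- `v` differs from the vector `c` carrying its orbit products on the representatives by a
product of commutators `[inl w, inr σ]`, and `c` is a `p'`-element. -/
lemma inl_mem_of_fiberProd_pow_eq_one {m : ℕ} [Fact p.Prime] (hH : ¬ p ∣ Nat.card H)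
    (hpm' : ¬ p ∣ m') {O : Subgroup (PermSdp m n H)} [O.Normal]
    (hO : IsPGroup p (PermSdp m n H ⧸ O))
    {v : Fin n → Multiplicative (ZMod m)}
    (hv : fiberProd (Quotient.mk (orbitRel H (Fin n))) v ^ m' = 1) :
    (inl v : PermSdp m n H) ∈ O := by
  set c := fiberProd Quotient.out (fiberProd (Quotient.mk (orbitRel H (Fin n))) v) with hc_def
  have hc : (inl c : PermSdp m n H) ∈ O :=
    O.mem_of_isPGroup_quotient hO hpm' (by rw [← map_pow, ← map_pow, hv, map_one, map_one])
  have hvc : v / c = ∏ i, Pi.mulSingle i (v i) /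
      Pi.mulSingle (⟦i⟧ : orbitRel.Quotient H (Fin n)).out (v i) := by
    rw [Finset.prod_div_distrib, Finset.univ_prod_mulSingle, hc_def, ← MonoidHom.comp_apply,
      ← fiberProd_comp, fiberProd_apply]
    rfl
  have hvc_mem : v / c ∈ O.comap inl := by
    rw [hvc]
    refine Subgroup.prod_mem _ fun i _ => ?_
    obtain ⟨σ, hσ, hσi⟩ := exists_apply_eq_out (H := H) i
    rw [← hσi]
    exact inl_mulSingle_div_mem (inr_mem_of_isPGroup_quotient hH hO) i (v i) hσ
  simpa using O.mul_mem hvc_mem hc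

lemma comap_orbitProdHom_le {m : ℕ} [Fact p.Prime] (hH : ¬ p ∣ Nat.card H)
    (hpm' : ¬ p ∣ m') (O : Subgroup (PermSdp m n H)) [O.Normal]
    (hO : IsPGroup p (PermSdp m n H ⧸ O)) :
    (powMonoidHom m').ker.comap orbitProdHom ≤ O := fun g hg => by
  rw [← inl_left_mul_inr_right g]
  exact O.mul_mem (inl_mem_of_fiberProd_pow_eq_one hH hpm' hO hg)
    (inr_mem_of_isPGroup_quotient hH hO g.right)

end Hyperfocal

section KerOrbitProd

open MulAction SemidirectProduct
open scoped Classical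

variable {m n : ℕ} {H : Subgroup (Equiv.Perm (Fin n))}

variable (H) in
noncomputable def kerOrbitProdInl (a : ℕ) :
    (fiberProd (Quotient.mk (orbitRel H (Fin n))) :
      (Fin n → (powMonoidHom a : Multiplicative (ZMod m) →* _).ker) →* _).ker →*
        PermSdp m n H :=
  inl.comp ((MonoidHom.compLeft (Subgroup.subtype _) (Fin n)).comp (Subgroup.subtype _))

lemma kerOrbitProdInl_injective (a : ℕ) :
    Function.Injective (kerOrbitProdInl (m := m) H a) :=
  inl_injective.comp ((Function.Injective.comp_left Subtype.val_injective).comp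
    Subtype.val_injective)

lemma map_inl_inf_comap_orbitProdHom_eq_range {a b : ℕ} (hab : a.Coprime b) :
    (powMonoidHom a).ker.map inl ⊓ (powMonoidHom b).ker.comap orbitProdHom =
      (kerOrbitProdInl (m := m) H a).range := by
  ext g
  simp only [Subgroup.mem_inf, Subgroup.mem_map, Subgroup.mem_comap, MonoidHom.mem_range,
    MonoidHom.mem_ker, powMonoidHom_apply]
  constructor
  · rintro ⟨⟨v, hv, rfl⟩, hb⟩
    have hva : fiberProd (Quotient.mk (orbitRel H (Fin n))) v = 1 :=
      (pow_eq_one_iff_of_coprime hab).mp ⟨by rw [← map_pow, hv, map_one], hb⟩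
    refine ⟨⟨fun i => ⟨v i, congrFun hv i⟩, funext fun ω => Subtype.ext ?_⟩, rfl⟩
    have := fiberProd_compLeft (Subgroup.subtype _) (Quotient.mk (orbitRel H (Fin n)))
      (fun i => (⟨v i, congrFun hv i⟩ : (powMonoidHom a : Multiplicative (ZMod m) →* _).ker))
    exact (congrFun this ω).symm.trans (congrFun hva ω)
  · rintro ⟨w, rfl⟩
    refine ⟨⟨_, funext fun i => (w.1 i).2, rfl⟩, ?_⟩
    show fiberProd _ (Subtype.val ∘ w.1) ^ b = 1
    rw [← Subgroup.coe_subtype, fiberProd_compLeft, w.2]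
    simp

end KerOrbitProd

lemma nontrivial_ker_powMonoidHom_zmod {a b : ℕ} (ha : 1 < a) (hb : 0 < b) :
    Nontrivial (powMonoidHom a : Multiplicative (ZMod (a * b)) →* _).ker := by
  rw [Subgroup.nontrivial_iff_exists_ne_one]
  refine ⟨Multiplicative.ofAdd (b : ZMod (a * b)), ?_, ?_⟩
  · rw [MonoidHom.mem_ker, powMonoidHom_apply, ← ofAdd_nsmul, nsmul_eq_mul, ← Nat.cast_mul,
      ZMod.natCast_self, ofAdd_zero]
  · rw [Ne, ofAdd_eq_one, ZMod.natCast_eq_zero_iff]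
    exact fun h => absurd (Nat.le_of_dvd hb h) (by nlinarith)

theorem stmt2_general {p : ℕ} [Fact p.Prime]
    {n m l m' : ℕ} (hl : 1 ≤ l) (hm' : 0 < m') (hm : m = p ^ l * m')
    (hpm' : ¬ p ∣ m')
    (H : Subgroup (Equiv.Perm (Fin n))) (hH : ¬ p ∣ Nat.card ↥H)
    -- `O = O^p(G)`, the smallest normal subgroup with `p`-group quotient
    (O : Subgroup (PermSdp m n H)) [O.Normal] (hOq : IsPGroup p (PermSdp m n H ⧸ O))
    (hOmin : ∀ (N : Subgroup (PermSdp m n H)) [N.Normal], IsPGroup p (PermSdp m n H ⧸ N) → O ≤ N)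
    -- `R = S ⊓ O` is a `p`-hyperfocal subgroup of `G`
    (S : Sylow p (PermSdp m n H)) (R : Subgroup (PermSdp m n H))
    (hR : R = (S : Subgroup (PermSdp m n H)) ⊓ O) :
    grpRank ↥R + grpRank ↥(fixedVectors m n H) = n := by
  classical
  subst hm
  have hpl : 1 < p ^ l := Nat.one_lt_pow (by omega) (Fact.out : p.Prime).one_lt
  have : NeZero (p ^ l * m') := ⟨by positivity⟩
  have : Fact (1 < p ^ l * m') := ⟨by nlinarith⟩
  have := nontrivial_ker_powMonoidHom_zmod hpl hm'
  have hO : O = (powMonoidHom m').ker.comap orbitProdHom :=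
    le_antisymm (hOmin _ isPGroup_quotient_comap_orbitProdHom)
      (comap_orbitProdHom_le hH hpm' O hOq)
  have hR' : R = (kerOrbitProdInl H (p ^ l)).range := by
    rw [hR, sylow_eq_map_inl_ker_powMonoidHom hH hpm' S, hO]
    exact map_inl_inf_comap_orbitProdHom_eq_range
      (Nat.Coprime.pow_left l ((Nat.Prime.coprime_iff_not_dvd Fact.out).mpr hpm'))
  rw [grpRank_congr ((MulEquiv.subgroupCongr hR').trans
      ((MonoidHom.ofInjective (kerOrbitProdInl_injective _)).symm.trans
        (fiberProdKerEquiv Quotient.out_eq))),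
    grpRank_congr (fixedVectorsEquiv (m := p ^ l * m') (H := H)), grpRank_pi_of_isCyclic,
    grpRank_pi_of_isCyclic, card_subtype_ne_add_card Quotient.out_eq, Nat.card_fin]

/-- With `m = p^l * m'`, `l ≥ 1`, `p ∤ m'`, and `H ≤ S_n` a `p'`-subgroup
acting on `(ℤ/mℤ)^n` by permuting coordinates, let `R` be a `p`-hyperfocal subgroup of
`G = (ℤ/mℤ)^n ⋊ H`. Then `rank R + rank C_{(ℤ/mℤ)^n}(H) = n`. -/
theorem stmt2 {k : Type} [Field k] {p : ℕ} [Fact p.Prime] [CharP k p]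
    {n m l m' : ℕ} (hn : 0 < n) (hl : 1 ≤ l) (hm' : 0 < m') (hm : m = p ^ l * m')
    (hpm' : ¬ p ∣ m')
    (H : Subgroup (Equiv.Perm (Fin n))) (hH : ¬ p ∣ Nat.card ↥H)
    -- `O = O^p(G)`, the smallest normal subgroup with `p`-group quotient
    (O : Subgroup (PermSdp m n H)) [O.Normal] (hOq : IsPGroup p (PermSdp m n H ⧸ O))
    (hOmin : ∀ (N : Subgroup (PermSdp m n H)) [N.Normal], IsPGroup p (PermSdp m n H ⧸ N) → O ≤ N)
    -- `R = S ⊓ O` is a `p`-hyperfocal subgroup of `G`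
    (S : Sylow p (PermSdp m n H)) (R : Subgroup (PermSdp m n H))
    (hR : R = (S : Subgroup (PermSdp m n H)) ⊓ O) :
    grpRank ↥R + grpRank ↥(fixedVectors m n H) = n :=
  stmt2_general hl hm' hm hpm' H hH O hOq hOmin S R hR
end

section
/- Let k be a field and n a positive integer, and let I ⊆ k[x_1,…,x_n] be the ideal generated by the elementary symmetric polynomials E_1,…,E_n in x_1,…,x_n. Then for every 1 ≤ i ≤ n, the monomial (x_1^{n-1} x_2^{n-2} ⋯ x_i^{n-i}) · x_i = x_1^{n-1} ⋯ x_{i-1}^{n-i+1} · x_i^{n-i+1} belongs to I. -/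
/-!
Modulo an ideal `J` containing the elementary symmetric polynomials of `x₀, …, x_{n-1}` in
positive degree, `∏ⱼ (T - xⱼ) = Tⁿ`. If moreover `x₀, …, x_{i-1}` vanish modulo `J`, the
product is also `T^i * ∏_{j ≥ i} (T - xⱼ)`; cancelling the regular element `T^i` and evaluating
at `xᵢ` gives `xᵢ^(n-i) ∈ J ⊔ (x₀, …, x_{i-1})`.

With `Nᵢ = ∏_{j<i} xⱼ^(n-1-j)`, strong induction on `i` shows that for `j < i` the product
`Nᵢ xⱼ` is a multiple of `Nⱼ xⱼ^(n-j) ∈ J`. So the colon ideal `J : Nᵢ` contains `J` and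
`x₀, …, x_{i-1}`, hence `xᵢ^(n-i)`, i.e. `Nᵢ xᵢ^(n-i) ∈ J`.
-/

open scoped BigOperators

universe u

noncomputable def coinvIdeal (k : Type u) [Field k] (n : ℕ) : Ideal (MvPolynomial (Fin n) k) :=
  Ideal.span ((fun j => MvPolynomial.esymm (Fin n) k j) '' (Set.Icc 1 n))

section

open Finset Polynomial

variable {S : Type*} [CommRing S]

lemma prod_X_sub_C_eq_X_pow_of_esymm_eq_zero {ι : Type*} [Fintype ι] (x : ι → S)
    (hx : ∀ k, 0 < k → (univ.val.map x).esymm k = 0) :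
    ∏ j, (X - C (x j)) = X ^ Fintype.card ι := by
  have h := Multiset.prod_X_sub_X_eq_sum_esymm (univ.val.map x)
  rw [Multiset.map_map] at h
  rw [prod_eq_multiset_prod, ← Function.comp_def (fun t => X - C t) x, h, sum_eq_single 0]
  · simp [Multiset.esymm]
  · intro k _ hk
    simp [hx k (Nat.pos_of_ne_zero hk)]
  · simp [Multiset.esymm]

lemma pow_card_sub_card_eq_zero_of_esymm_eq_zero {ι : Type*} [Fintype ι] [DecidableEq ι]
    (x : ι → S) (hx : ∀ k, 0 < k → (univ.val.map x).esymm k = 0) {T : Finset ι}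
    (hT : ∀ j ∈ T, x j = 0) {i : ι} (hi : i ∉ T) : x i ^ (Fintype.card ι - #T) = 0 := by
  have hsplit : ∏ j, (X - C (x j)) = X ^ #T * ∏ j ∈ Tᶜ, (X - C (x j)) := by
    rw [← prod_mul_prod_compl T, prod_congr rfl fun j hj => by rw [hT j hj, map_zero, sub_zero],
      prod_const]
  have hrest : ∏ j ∈ Tᶜ, (X - C (x j)) = X ^ (Fintype.card ι - #T) := by
    apply (isRegular_X_pow #T).left
    beta_reduce
    rw [← hsplit, prod_X_sub_C_eq_X_pow_of_esymm_eq_zero x hx, ← pow_add,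
      Nat.add_sub_cancel' (card_le_univ T)]
  have h := congrArg (eval (x i)) hrest
  rwa [eval_prod, prod_eq_zero (mem_compl.2 hi) (by simp), eval_pow, eval_X, eq_comm] at h

lemma pow_card_sub_card_mem_of_esymm_mem {ι : Type*} [Fintype ι] [DecidableEq ι] (J : Ideal S)
    (x : ι → S) (hx : ∀ k, 0 < k → (univ.val.map x).esymm k ∈ J) {T : Finset ι}
    (hT : ∀ j ∈ T, x j ∈ J) {i : ι} (hi : i ∉ T) : x i ^ (Fintype.card ι - #T) ∈ J := by
  rw [← Ideal.Quotient.eq_zero_iff_mem, map_pow]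
  refine pow_card_sub_card_eq_zero_of_esymm_eq_zero (fun j => Ideal.Quotient.mk J (x j))
    (fun k hk => ?_) (fun j hj => Ideal.Quotient.eq_zero_iff_mem.2 (hT j hj)) hi
  rw [esymm_map_val, ← Ideal.Quotient.eq_zero_iff_mem.2 (hx k hk), esymm_map_val, map_sum]
  simp only [map_prod]

lemma prod_pow_mul_pow_mem_of_esymm_mem {n : ℕ} (J : Ideal S) (x : Fin n → S)
    (hx : ∀ k, 0 < k → (univ.val.map x).esymm k ∈ J) (i : Fin n) :
    (∏ j ∈ Iio i, x j ^ (n - 1 - j)) * x i ^ (n - i) ∈ J := by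
  induction i using WellFoundedLT.induction with
  | _ i ih =>
  set N := ∏ j ∈ Iio i, x j ^ (n - 1 - j)
  have hcolon : ∀ j ∈ Iio i, x j ∈ J.colon {N} := fun j hj => by
    rw [Submodule.mem_colon_singleton, smul_eq_mul]
    refine J.mem_of_dvd ?_ (ih j (mem_Iio.1 hj))
    calc (∏ l ∈ Iio j, x l ^ (n - 1 - l)) * x j ^ (n - j)
        = (∏ l ∈ Iic j, x l ^ (n - 1 - l)) * x j := by
          rw [← Iio_insert, prod_insert notMem_Iio_self, (by omega : n - j = n - 1 - j + 1),
            pow_succ]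
          ring
      _ ∣ N * x j := mul_dvd_mul_right (prod_dvd_prod_of_subset _ _ _ fun l hl =>
          mem_Iio.2 ((mem_Iic.1 hl).trans_lt (mem_Iio.1 hj))) _
      _ = x j * N := mul_comm _ _
  have hJ : J ≤ J.colon {N} := fun r hr => by
    rw [Submodule.mem_colon_singleton, smul_eq_mul]
    exact J.mul_mem_right N hr
  have h := pow_card_sub_card_mem_of_esymm_mem _ x (fun k hk => hJ (hx k hk)) hcolon
    notMem_Iio_self
  rwa [Fintype.card_fin, Fin.card_Iio, Submodule.mem_colon_singleton, smul_eq_mul,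
    mul_comm] at h

lemma esymm_mem_coinvIdeal {k : Type*} [Field k] {n m : ℕ} (hm : 0 < m) :
    MvPolynomial.esymm (Fin n) k m ∈ coinvIdeal k n := by
  rcases le_or_gt m n with hmn | hnm
  · exact Ideal.subset_span ⟨m, ⟨hm, hmn⟩, rfl⟩
  · rw [MvPolynomial.esymm, powersetCard_eq_empty.2 (by simpa using hnm), sum_empty]
    exact Submodule.zero_mem _

end

theorem stmt13_general {k : Type} [Field k] {n : ℕ} (i : Fin n) :
    (∏ j ∈ Finset.Iio i, MvPolynomial.X j ^ (n - 1 - (j : ℕ))) *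
      MvPolynomial.X i ^ (n - (i : ℕ)) ∈ coinvIdeal k n :=
  prod_pow_mul_pow_mem_of_esymm_mem _ _ (fun m hm => by
    rw [← MvPolynomial.esymm_eq_multiset_esymm]
    exact esymm_mem_coinvIdeal hm) i

/-- For every `1 ≤ i ≤ n` (here `i : Fin n` is zero-based, so it denotes
the variable `x_{i+1}`), the monomial
`x_1^{n-1} x_2^{n-2} ⋯ x_{i-1}^{n-i+1} · x_i^{n-i+1}` lies in the ideal generated by the
elementary symmetric polynomials. -/
theorem stmt13 {k : Type} [Field k] {n : ℕ} (hn : 0 < n) (i : Fin n) :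
    (∏ j ∈ Finset.Iio i, MvPolynomial.X j ^ (n - 1 - (j : ℕ))) *
      MvPolynomial.X i ^ (n - (i : ℕ)) ∈ coinvIdeal k n :=
  stmt13_general i
end

section
/- Let k be a field, n a positive integer, and I ⊆ k[x_1,…,x_n] the ideal generated by the elementary symmetric polynomials E_1,…,E_n. Order monomials lexicographically by their exponent vectors: x_1^{a_1}⋯x_n^{a_n} > x_1^{b_1}⋯x_n^{b_n} iff a_s > b_s where s is the first index with a_s ≠ b_s. Then every monomial that is strictly greater than Δ := x_1^{n-1} x_2^{n-2} ⋯ x_{n-1}^1 in this order belongs to I. -/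
open scoped BigOperators

universe u

/-!
Modulo `I`, `x_s^m ≡ (-1)^m e_m(x_j : j ≠ s)` for every `m`. Hence the staircase monomial
`x_1^{n-1} ⋯ x_{s-1}^{n-s+1} x_s^m` with `m ≥ n-s+1` is congruent to a combination of the
`x_1^{n-1} ⋯ x_{s-1}^{n-s+1} ∏_{j ∈ S} x_j` with `|S| = m` and `s ∉ S`. Only `n - s` variables
follow `x_s`, so `S` contains some `t < s`, and the term is a multiple of the staircase monomial
at `t` with exponent `n-t+1`, which lies in `I` by induction on `s`. A monomial above `Δ` is a
multiple of a staircase monomial. (Indices here start at 1; `Fin n` shifts them down by one.)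
-/

open Finset

namespace Multiset

variable {R : Type*} [CommRing R]

theorem esymm_cons_succ (a : R) (s : Multiset R) (m : ℕ) :
    (a ::ₘ s).esymm (m + 1) = s.esymm (m + 1) + a * s.esymm m := by
  simp [esymm, powersetCard_cons, map_map, prod_cons, sum_map_mul_left]

/-- `(1 + a T) ∑ e_j(s) T^j = ∑ e_j(a ::ₘ s) T^j ≡ 1`, so `∑ e_j(s) T^j ≡ ∑ (-a)^j T^j`. -/
theorem pow_sub_neg_one_pow_mul_esymm_mem {I : Ideal R} {a : R} {s : Multiset R}
    (h : ∀ j, 1 ≤ j → (a ::ₘ s).esymm j ∈ I) (m : ℕ) :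
    a ^ m - (-1) ^ m * s.esymm m ∈ I := by
  induction m with
  | zero => simp [esymm, powersetCard_zero_left]
  | succ m ih =>
    have hrec : a ^ (m + 1) - (-1) ^ (m + 1) * s.esymm (m + 1) =
        a * (a ^ m - (-1) ^ m * s.esymm m) + (-1) ^ m * (a ::ₘ s).esymm (m + 1) := by
      rw [esymm_cons_succ]; ring
    rw [hrec]
    exact add_mem (I.mul_mem_left _ ih) (I.mul_mem_left _ (h _ m.succ_pos))

end Multiset

theorem Fin.exists_mem_lt_of_subset_erase {n : ℕ} {s : Fin n} {S : Finset (Fin n)}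
    (hS : S ⊆ univ.erase s) (hcard : n - s ≤ #S) : ∃ t ∈ S, t < s := by
  by_contra! hge
  have hsub : S ⊆ Ioi s := fun t ht =>
    mem_Ioi.2 (lt_of_le_of_ne (hge t ht) (ne_of_mem_erase (hS ht)).symm)
  have := card_le_card hsub
  rw [Fin.card_Ioi] at this
  omega

theorem prod_Iio_mul_pow_dvd_prod_Iio_mul_prod {M : Type*} [CommMonoid M] {n : ℕ}
    {x : Fin n → M} {s t : Fin n} {S : Finset (Fin n)} (hts : t < s) (ht : t ∈ S) :
    (∏ j ∈ Iio t, x j ^ (n - 1 - j)) * x t ^ (n - t) ∣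
      (∏ j ∈ Iio s, x j ^ (n - 1 - j)) * ∏ i ∈ S, x i := by
  have hexp : n - t = (n - 1 - t) + 1 := by omega
  rw [hexp, pow_succ, ← mul_assoc, mul_comm (∏ j ∈ Iio t, _),
    ← prod_insert (f := fun j => x j ^ (n - 1 - (j : ℕ))) notMem_Iio_self, Iio_insert]
  exact mul_dvd_mul
    (prod_dvd_prod_of_subset _ _ _ fun j hj => mem_Iio.2 ((mem_Iic.1 hj).trans_lt hts))
    (dvd_prod_of_mem _ ht)

theorem prod_Iio_mul_pow_mem {R : Type*} [CommRing R] {I : Ideal R} {n : ℕ} {x : Fin n → R}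
    (hx : ∀ j, 1 ≤ j → (univ.val.map x).esymm j ∈ I) (s : Fin n) {m : ℕ} (hm : n - s ≤ m) :
    (∏ j ∈ Iio s, x j ^ (n - 1 - j)) * x s ^ m ∈ I := by
  induction s using WellFoundedLT.induction generalizing m with
  | _ s ih =>
  set P := ∏ j ∈ Iio s, x j ^ (n - 1 - j)
  set others := (univ.erase s).val.map x
  have hcons : x s ::ₘ others = univ.val.map x := by
    rw [← Multiset.map_cons, erase_val, Multiset.cons_erase (mem_univ s)]
  have hsplit : P * x s ^ m =
      P * (x s ^ m - (-1) ^ m * others.esymm m) + (-1) ^ m * (P * others.esymm m) := by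
    ring
  rw [hsplit]
  refine add_mem (I.mul_mem_left _ (Multiset.pow_sub_neg_one_pow_mul_esymm_mem
    (hcons ▸ hx) m)) (I.mul_mem_left _ ?_)
  rw [esymm_map_val, mul_sum]
  refine sum_mem fun S hS => ?_
  obtain ⟨hSsub, hScard⟩ := mem_powersetCard.1 hS
  obtain ⟨t, htS, hts⟩ := Fin.exists_mem_lt_of_subset_erase hSsub (hScard ▸ hm)
  exact I.mem_of_dvd (prod_Iio_mul_pow_dvd_prod_Iio_mul_prod hts htS) (ih t hts le_rfl)

theorem esymm_X_mem_coinvIdeal (k : Type u) [Field k] (n j : ℕ) (hj : 1 ≤ j) :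
    (univ.val.map MvPolynomial.X).esymm j ∈ coinvIdeal k n := by
  rw [← MvPolynomial.esymm_eq_multiset_esymm]
  rcases le_or_gt j n with hjn | hjn
  · exact Ideal.subset_span ⟨j, ⟨hj, hjn⟩, rfl⟩
  · rw [MvPolynomial.esymm, powersetCard_eq_empty.2 (by simpa using hjn), sum_empty]
    exact zero_mem _

theorem stmt14_general {k : Type} [Field k] {n : ℕ} (d : Fin n → ℕ)
    (hlex : ∃ s : Fin n, (∀ j : Fin n, j < s → d j = n - 1 - (j : ℕ)) ∧
      n - 1 - (s : ℕ) < d s) :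
    (∏ i, MvPolynomial.X i ^ d i) ∈ coinvIdeal k n := by
  obtain ⟨s, hpre, hs⟩ := hlex
  have hstair := prod_Iio_mul_pow_mem (esymm_X_mem_coinvIdeal k n) s (m := d s) (by omega)
  refine Ideal.mem_of_dvd _ ?_ hstair
  rw [prod_congr rfl fun j hj => by rw [← hpre j (mem_Iio.1 hj)], mul_comm,
    ← prod_insert (f := fun j => MvPolynomial.X j ^ d j) notMem_Iio_self, Iio_insert]
  exact prod_dvd_prod_of_subset _ _ _ (subset_univ _)

/-- Every monomial `x^d` that is strictly greater than
`Δ = x_1^{n-1} x_2^{n-2} ⋯ x_{n-1}` in the lexicographic order on exponent vectors lies in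
the ideal generated by the elementary symmetric polynomials. -/
theorem stmt14 {k : Type} [Field k] {n : ℕ} (hn : 0 < n) (d : Fin n → ℕ)
    (hlex : ∃ s : Fin n, (∀ j : Fin n, j < s → d j = n - 1 - (j : ℕ)) ∧
      n - 1 - (s : ℕ) < d s) :
    (∏ i, MvPolynomial.X i ^ d i) ∈ coinvIdeal k n :=
  stmt14_general d hlex
end

section
/- Let k be a field, n a positive integer, and I ⊆ k[x_1,…,x_n] the ideal generated by the elementary symmetric polynomials E_1,…,E_n. Let Δ := ∏_{j=1}^n x_j^{n-j}. Then for every permutation σ ∈ S_n (acting on polynomials by permuting the variables, σ(f)(x_1,…,x_n) = f(x_{σ^{-1}(1)},…,x_{σ^{-1}(n)})), one has σ(Δ) − sgn(σ)·Δ ∈ I; that is, in the coinvariant algebra C = k[x_1,…,x_n]/I the image of Δ transforms by the sign character under the S_n-action. -/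
open scoped BigOperators

universe u

/-!
The permutations `σ` with `σ(Δ) ≡ sgn(σ) Δ` modulo `I` form a submonoid of `S_n`, because `I`
is `S_n`-stable, so it suffices to treat the adjacent transpositions. Let `ι_p` embed the
polynomials in the `n - 1` variables other than `x_p`. Modulo `I`, `ι_p(E_j) ≡ (-x_p)^j`,
hence `ι_p(I_{n-1}) · y ⊆ I_n` as soon as `x_p y ∈ I_n`. Now
`Δ_n = ι_1(Δ_{n-1}) · x_1^{n-1}` with `x_1^n ∈ I_n`, and `Δ_n = ι_n(Δ_{n-1}) · x_1 ⋯ x_{n-1}`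
with `x_1 ⋯ x_n = E_n`; so a transposition fixing `x_1` or `x_n` reduces to `n - 1` variables.
What remains is `s_1(x_1) + x_1 = E_1` in two variables.
-/

open MvPolynomial Equiv Equiv.Perm

theorem Multiset.esymm_cons_succ_s15 {R : Type*} [CommSemiring R] (a : R) (s : Multiset R) (j : ℕ) :
    (a ::ₘ s).esymm (j + 1) = s.esymm (j + 1) + a * s.esymm j := by
  simp only [Multiset.esymm, Multiset.powersetCard_cons, Multiset.map_add, Multiset.sum_add,
    Multiset.map_map, Function.comp_def, Multiset.prod_cons, Multiset.sum_map_mul_left]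

theorem Function.Injective.sign_swap_apply {α β : Type*} [DecidableEq α] [Fintype α]
    [DecidableEq β] [Fintype β] {f : α → β} (hf : Function.Injective f) (a b : α) :
    sign (Equiv.swap (f a) (f b)) = sign (Equiv.swap a b) := by
  rcases eq_or_ne a b with rfl | hab
  · simp
  · rw [sign_swap hab, sign_swap (hf.ne hab)]

namespace MvPolynomial

variable {R : Type*} [CommSemiring R]

theorem rename_swap_rename_of_injective {σ τ : Type*} [DecidableEq σ] [DecidableEq τ]
    {f : σ → τ} (hf : Function.Injective f) (a b : σ) (g : MvPolynomial σ R) :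
    rename (swap (f a) (f b)) (rename f g) = rename f (rename (swap a b) g) := by
  simp only [rename_rename, Function.comp_def, hf.swap_apply]

theorem esymm_fin_succ_eq_rename_succAbove (n j : ℕ) (p : Fin (n + 1)) :
    esymm (Fin (n + 1)) R (j + 1) =
      rename p.succAbove (esymm (Fin n) R (j + 1)) +
        X p * rename p.succAbove (esymm (Fin n) R j) := by
  have huniv : (Finset.univ.val.map X : Multiset (MvPolynomial (Fin (n + 1)) R)) =
      X p ::ₘ Finset.univ.val.map (X ∘ p.succAbove) := by
    rw [Fin.univ_succAbove n p, Finset.cons_val, Multiset.map_cons, Finset.map_val,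
      Multiset.map_map]
    rfl
  rw [rename_eq_aeval, aeval_esymm_eq_multiset_esymm, aeval_esymm_eq_multiset_esymm,
    esymm_eq_multiset_esymm, huniv, Multiset.esymm_cons_succ_s15]

theorem esymm_card (σ : Type*) [Fintype σ] : esymm σ R (Fintype.card σ) = ∏ i, X i := by
  rw [esymm, ← Finset.card_univ, Finset.powersetCard_self, Finset.sum_singleton]

theorem esymm_eq_zero_of_card_lt {σ : Type*} [Fintype σ] {j : ℕ} (h : Fintype.card σ < j) :
    esymm σ R j = 0 := by
  rw [esymm, Finset.powersetCard_eq_empty.2 (by simpa using h), Finset.sum_empty]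

end MvPolynomial

/-- `Δ = x_1^{n-1} x_2^{n-2} ⋯ x_{n-1}`, with the variables indexed from `0`. -/
noncomputable def staircase (R : Type*) [CommSemiring R] (n : ℕ) : MvPolynomial (Fin n) R :=
  ∏ i : Fin n, X i ^ (n - 1 - (i : ℕ))

section staircase

variable {R : Type*} [CommSemiring R]

theorem staircase_succ_eq_rename_succ_mul (n : ℕ) :
    staircase R (n + 1) = rename Fin.succ (staircase R n) * X 0 ^ n := by
  simp only [staircase, Fin.prod_univ_succ, map_prod, map_pow, rename_X, Fin.val_succ,
    Fin.val_zero]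
  rw [mul_comm]
  congr 1
  exact Finset.prod_congr rfl fun i _ => by congr 1; omega

theorem staircase_succ_eq_rename_castSucc_mul (n : ℕ) :
    staircase R (n + 1) = rename Fin.castSucc (staircase R n) * ∏ i : Fin n, X i.castSucc := by
  simp only [staircase, Fin.prod_univ_castSucc, map_prod, map_pow, rename_X, Fin.val_castSucc,
    Fin.val_last, ← Finset.prod_mul_distrib, Nat.add_sub_cancel, Nat.sub_self, pow_zero, mul_one]
  exact Finset.prod_congr rfl fun i _ => by rw [← pow_succ]; congr 1; omega

end staircase

section coinvariants

variable {k : Type*} [Field k]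

theorem esymm_mem_coinvIdeal_s15 {n j : ℕ} (h1 : 1 ≤ j) (h2 : j ≤ n) :
    esymm (Fin n) k j ∈ coinvIdeal k n :=
  Ideal.subset_span ⟨j, ⟨h1, h2⟩, rfl⟩

theorem rename_mem_coinvIdeal {n : ℕ} (σ : Perm (Fin n)) {g : MvPolynomial (Fin n) k}
    (hg : g ∈ coinvIdeal k n) : rename σ g ∈ coinvIdeal k n := by
  suffices coinvIdeal k n ≤ (coinvIdeal k n).comap (rename σ) from this hg
  refine Ideal.span_le.2 ?_
  rintro _ ⟨j, ⟨hj, hjn⟩, rfl⟩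
  rw [SetLike.mem_coe, Ideal.mem_comap]
  beta_reduce
  rw [esymm_isSymmetric _ _ j σ]
  exact esymm_mem_coinvIdeal_s15 hj hjn

theorem rename_succAbove_esymm_sub_mem (n : ℕ) (p : Fin (n + 1)) {j : ℕ} (hj : j ≤ n + 1) :
    rename p.succAbove (esymm (Fin n) k j) - (-X p) ^ j ∈ coinvIdeal k (n + 1) := by
  induction j with
  | zero => simp
  | succ j ih =>
    have h : rename p.succAbove (esymm (Fin n) k (j + 1)) - (-X p) ^ (j + 1) =
        esymm (Fin (n + 1)) k (j + 1) -
          X p * (rename p.succAbove (esymm (Fin n) k j) - (-X p) ^ j) := by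
      rw [esymm_fin_succ_eq_rename_succAbove n j p]; ring
    rw [h]
    exact sub_mem (esymm_mem_coinvIdeal_s15 j.succ_pos hj) (Ideal.mul_mem_left _ _ (ih (by omega)))

theorem rename_succAbove_mul_mem {n : ℕ} (p : Fin (n + 1)) {y : MvPolynomial (Fin (n + 1)) k}
    (hy : X p * y ∈ coinvIdeal k (n + 1)) {g : MvPolynomial (Fin n) k}
    (hg : g ∈ coinvIdeal k n) : rename p.succAbove g * y ∈ coinvIdeal k (n + 1) := by
  suffices coinvIdeal k n ≤ ((coinvIdeal k (n + 1)).colon {y}).comap (rename p.succAbove) from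
    Submodule.mem_colon_singleton.1 (this hg)
  refine Ideal.span_le.2 ?_
  rintro _ ⟨_, ⟨hj, hjn⟩, rfl⟩
  obtain ⟨j, rfl⟩ := Nat.exists_eq_add_of_le' hj
  rw [SetLike.mem_coe, Ideal.mem_comap, Submodule.mem_colon_singleton, smul_eq_mul]
  beta_reduce
  have h : rename p.succAbove (esymm (Fin n) k (j + 1)) * y =
      (rename p.succAbove (esymm (Fin n) k (j + 1)) - (-X p) ^ (j + 1)) * y
        - (-X p) ^ j * (X p * y) := by ring
  rw [h]
  exact sub_mem (Ideal.mul_mem_right _ _ (rename_succAbove_esymm_sub_mem n p (by omega)))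
    (Ideal.mul_mem_left _ _ hy)

theorem X_pow_mem_coinvIdeal (n : ℕ) (p : Fin (n + 1)) :
    X p ^ (n + 1) ∈ coinvIdeal k (n + 1) := by
  have h := rename_succAbove_esymm_sub_mem (k := k) n p le_rfl
  have h0 : esymm (Fin n) k (n + 1) = 0 :=
    esymm_eq_zero_of_card_lt (by rw [Fintype.card_fin]; omega)
  rw [h0, map_zero, zero_sub, neg_mem_iff] at h
  rw [← neg_neg (X p), neg_pow]
  exact Ideal.mul_mem_left _ _ h

theorem X_mul_prod_succAbove_mem_coinvIdeal (n : ℕ) (p : Fin (n + 1)) :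
    X p * ∏ i, X (p.succAbove i) ∈ coinvIdeal k (n + 1) := by
  have h := esymm_card (R := k) (Fin (n + 1))
  rw [Fintype.card_fin] at h
  rw [← Fin.prod_univ_succAbove, ← h]
  exact esymm_mem_coinvIdeal_s15 (by omega) le_rfl

end coinvariants

variable (k : Type*) [Field k] in
/-- `Δ = x_1^{n-1} x_2^{n-2} ⋯ x_{n-1}`, with the variables indexed from `0`. -/
noncomputable def staircaseSignSubmonoid (n : ℕ) : Submonoid (Perm (Fin n)) where
  carrier := {σ | rename σ (staircase k n) - (sign σ : ℤ) • staircase k n ∈ coinvIdeal k n}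
  one_mem' := by simp
  mul_mem' {σ τ} hσ hτ := by
    have h : rename ⇑(σ * τ) (staircase k n) - (sign (σ * τ) : ℤ) • staircase k n =
        rename σ (rename τ (staircase k n) - (sign τ : ℤ) • staircase k n) +
          (sign τ : ℤ) • (rename σ (staircase k n) - (sign σ : ℤ) • staircase k n) := by
      rw [coe_mul, ← rename_rename, Perm.sign_mul, Units.val_mul, map_sub, map_zsmul, smul_sub,
        smul_smul, mul_comm (sign τ : ℤ)]
      abel
    change _ ∈ coinvIdeal k n
    rw [h]
    exact add_mem (rename_mem_coinvIdeal σ hτ) (zsmul_mem hσ _)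

section swaps

variable {k : Type*} [Field k]

theorem mem_staircaseSignSubmonoid {n : ℕ} {σ : Perm (Fin n)} :
    σ ∈ staircaseSignSubmonoid k n ↔
      rename σ (staircase k n) - (sign σ : ℤ) • staircase k n ∈ coinvIdeal k n :=
  Iff.rfl

theorem swap_succAbove_mem_staircaseSignSubmonoid {n : ℕ} (p : Fin (n + 1))
    {y : MvPolynomial (Fin (n + 1)) k}
    (hstair : staircase k (n + 1) = rename p.succAbove (staircase k n) * y)
    (hy : X p * y ∈ coinvIdeal k (n + 1)) {a b : Fin n}
    (hswap : rename (swap (p.succAbove a) (p.succAbove b)) y = y)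
    (hab : swap a b ∈ staircaseSignSubmonoid k n) :
    swap (p.succAbove a) (p.succAbove b) ∈ staircaseSignSubmonoid k (n + 1) := by
  rw [mem_staircaseSignSubmonoid] at hab ⊢
  have h : rename (swap (p.succAbove a) (p.succAbove b)) (staircase k (n + 1)) -
        (sign (swap (p.succAbove a) (p.succAbove b)) : ℤ) • staircase k (n + 1) =
      rename p.succAbove (rename (swap a b) (staircase k n) -
        (sign (swap a b) : ℤ) • staircase k n) * y := by
    rw [hstair, map_mul, hswap, rename_swap_rename_of_injective Fin.succAbove_right_injective,
      Function.Injective.sign_swap_apply Fin.succAbove_right_injective, map_sub, map_zsmul,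
      sub_mul, smul_mul_assoc]
  rw [h]
  exact rename_succAbove_mul_mem p hy hab

theorem swap_succ_mem_staircaseSignSubmonoid {n : ℕ} {a b : Fin n}
    (hab : swap a b ∈ staircaseSignSubmonoid k n) :
    swap a.succ b.succ ∈ staircaseSignSubmonoid k (n + 1) := by
  rw [← Fin.succAbove_zero]
  refine swap_succAbove_mem_staircaseSignSubmonoid 0 (y := X 0 ^ n) ?_ ?_ ?_ hab
  · rw [Fin.succAbove_zero]; exact staircase_succ_eq_rename_succ_mul n
  · rw [← pow_succ']; exact X_pow_mem_coinvIdeal n 0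
  · rw [map_pow, rename_X, swap_apply_of_ne_of_ne (Fin.succAbove_ne _ _).symm
      (Fin.succAbove_ne _ _).symm]

theorem swap_castSucc_mem_staircaseSignSubmonoid {n : ℕ} {a b : Fin n}
    (hab : swap a b ∈ staircaseSignSubmonoid k n) :
    swap a.castSucc b.castSucc ∈ staircaseSignSubmonoid k (n + 1) := by
  rw [← Fin.succAbove_last]
  refine swap_succAbove_mem_staircaseSignSubmonoid (Fin.last n) (y := ∏ i : Fin n, X i.castSucc)
    ?_ ?_ ?_ hab
  · rw [Fin.succAbove_last]; exact staircase_succ_eq_rename_castSucc_mul n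
  · simpa only [Fin.succAbove_last] using X_mul_prod_succAbove_mem_coinvIdeal n (Fin.last n)
  · simp only [map_prod, rename_X, Fin.succAbove_last, (Fin.castSucc_injective n).swap_apply]
    exact Equiv.prod_comp (swap a b) fun i => (X i.castSucc : MvPolynomial (Fin (n + 1)) k)

theorem swap_zero_one_mem_staircaseSignSubmonoid :
    swap 0 1 ∈ staircaseSignSubmonoid k 2 := by
  have hstair : staircase k 2 = X 0 := by simp [staircase]
  rw [mem_staircaseSignSubmonoid, hstair, sign_swap (by decide), rename_X, swap_apply_left,
    Units.val_neg, Units.val_one, neg_one_zsmul, sub_neg_eq_add, add_comm, ← Fin.sum_univ_two,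
    ← esymm_one]
  exact esymm_mem_coinvIdeal_s15 le_rfl (by norm_num)

theorem swap_castSucc_succ_mem_staircaseSignSubmonoid :
    ∀ {n : ℕ} (i : Fin n), swap i.castSucc i.succ ∈ staircaseSignSubmonoid k (n + 1) := by
  intro n
  induction n with
  | zero => exact fun i => i.elim0
  | succ n ih =>
    intro i
    cases i using Fin.cases with
    | zero =>
      cases n with
      | zero => exact swap_zero_one_mem_staircaseSignSubmonoid
      | succ n => simpa using swap_castSucc_mem_staircaseSignSubmonoid (ih 0)
    | succ j =>
      rw [← Fin.succ_castSucc]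
      exact swap_succ_mem_staircaseSignSubmonoid (ih j)

end swaps

theorem stmt15_general {k : Type} [Field k] {n : ℕ} (σ : Equiv.Perm (Fin n)) :
    MvPolynomial.rename (⇑σ) (∏ i : Fin n, MvPolynomial.X i ^ (n - 1 - (i : ℕ))) -
      ((Equiv.Perm.sign σ : ℤ) • ∏ i : Fin n, MvPolynomial.X i ^ (n - 1 - (i : ℕ)))
      ∈ coinvIdeal k n := by
  suffices staircaseSignSubmonoid k n = ⊤ from
    mem_staircaseSignSubmonoid.1 (this ▸ Submonoid.mem_top σ)
  rw [eq_top_iff]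
  cases n with
  | zero => exact fun τ _ => Subsingleton.elim τ 1 ▸ one_mem _
  | succ n =>
    rw [← mclosure_swap_castSucc_succ, Submonoid.closure_le]
    rintro _ ⟨i, rfl⟩
    exact swap_castSucc_succ_mem_staircaseSignSubmonoid i

/-- For every permutation `σ ∈ S_n`, acting on polynomials by permuting
the variables, `σ(Δ) - sgn(σ)·Δ` lies in the ideal generated by the elementary symmetric
polynomials, where `Δ = x_1^{n-1} x_2^{n-2} ⋯ x_{n-1}`: in the coinvariant algebra the
image of `Δ` transforms by the sign character. -/
theorem stmt15 {k : Type} [Field k] {n : ℕ} (hn : 0 < n) (σ : Equiv.Perm (Fin n)) :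
    MvPolynomial.rename (⇑σ) (∏ i : Fin n, MvPolynomial.X i ^ (n - 1 - (i : ℕ))) -
      ((Equiv.Perm.sign σ : ℤ) • ∏ i : Fin n, MvPolynomial.X i ^ (n - 1 - (i : ℕ)))
      ∈ coinvIdeal k n :=
  stmt15_general σ
end
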